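/- For α ∈ (0, 1/2), the ratio ((1 − 2α)·ln((1−α)/α)) / (2(Φ^{−1}(1−α))²), where Φ^{−1} is the standard normal quantile function, is well defined and strictly positive; at α ≈ 0.235 (the value satisfying the minimax fixed point of the Wald problem) this ratio is approximately 0.6. -/

import Mathlib

/-!
Positivity: for `α < 1/2` we have `1 - α > 1/2 = Φ 0`, so `Φ⁻¹ (1 - α) > 0`, while `1 - 2α > 0`
and `(1 - α)/α > 1`.

Approximation: both the numerator `(1 - 2α) log((1 - α)/α)` and `Φ⁻¹ (1 - α)` decrease in `α`,
so on an interval `[lo, hi]` the ratio lies between its numerator at `hi` over the denominator at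
`lo` and vice versa. This squeeze is too coarse on `[0.234, 0.236]` but suffices on each half. The
endpoint values are certified by second-order Taylor bounds: for `exp` near `1` (giving the
logarithms) and for the Gaussian density on `[0, 1]`, integrated to bound `Φ` near `0.72`.
-/

open MeasureTheory ProbabilityTheory Set

/-- The standard normal CDF `Φ`. -/
noncomputable def stdNormalCDF (x : ℝ) : ℝ :=
  ((gaussianReal 0 1) (Set.Iic x)).toReal

/-- The standard normal quantile function `Φ⁻¹` (a two-sided inverse of `Φ` on `(0,1)`). -/
noncomputable def stdNormalQuantile : ℝ → ℝ :=
  Function.invFun stdNormalCDF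

/-- The ratio `E[τ*]/T_{R*}` as a function of the misidentification probability `α`. -/
noncomputable def adaptiveGainRatio (α : ℝ) : ℝ :=
  (1 - 2 * α) * Real.log ((1 - α) / α) / (2 * (stdNormalQuantile (1 - α)) ^ 2)

open Real

lemma stdNormalCDF_eq_cdf : stdNormalCDF = cdf (gaussianReal 0 1) :=
  funext fun x => (cdf_eq_real _ x).symm

lemma stdNormalCDF_eq_integral (x : ℝ) :
    stdNormalCDF x = ∫ t in Iic x, gaussianPDFReal 0 1 t := by
  rw [stdNormalCDF, gaussianReal_apply_eq_integral 0 one_ne_zero, ENNReal.toReal_ofReal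
    (setIntegral_nonneg measurableSet_Iic fun t _ => gaussianPDFReal_nonneg 0 1 t)]

lemma stdNormalCDF_sub_stdNormalCDF (a b : ℝ) :
    stdNormalCDF b - stdNormalCDF a = ∫ t in a..b, gaussianPDFReal 0 1 t := by
  rw [stdNormalCDF_eq_integral, stdNormalCDF_eq_integral]
  exact intervalIntegral.integral_Iic_sub_Iic (integrable_gaussianPDFReal 0 1).integrableOn
    (integrable_gaussianPDFReal 0 1).integrableOn

lemma stdNormalCDF_zero : stdNormalCDF 0 = 1 / 2 := by
  have := nullSingletonClass_gaussianReal (μ := 0) one_ne_zero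
  have hsymm : (gaussianReal 0 1).real (Iic 0) = (gaussianReal 0 1).real (Ici 0) := by
    have h := congrArg (fun ν : Measure ℝ => ν.real (Iic 0)) (gaussianReal_map_neg (μ := 0) (v := 1))
    simp only [neg_zero] at h
    rw [← h, map_measureReal_apply measurable_neg measurableSet_Iic]
    simp
  have hIci : (gaussianReal 0 1).real (Ici 0) = (gaussianReal 0 1).real (Ioi 0) :=
    measureReal_congr Ioi_ae_eq_Ici.symm
  have hcompl : (gaussianReal 0 1).real (Iic 0) + (gaussianReal 0 1).real (Ioi 0) = 1 := by
    rw [← compl_Iic, probReal_compl_eq_one_sub measurableSet_Iic]; ring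
  change (gaussianReal 0 1).real (Iic 0) = 1 / 2
  linarith

lemma strictMono_stdNormalCDF : StrictMono stdNormalCDF := fun a b hab => by
  have hpos : 0 < ∫ t in a..b, gaussianPDFReal 0 1 t :=
    intervalIntegral.intervalIntegral_pos_of_pos_on
      (integrable_gaussianPDFReal 0 1).intervalIntegrable
      (fun t _ => gaussianPDFReal_pos 0 1 t one_ne_zero) hab
  linarith [stdNormalCDF_sub_stdNormalCDF a b]

lemma continuous_stdNormalCDF : Continuous stdNormalCDF := by
  have h : stdNormalCDF = fun x => stdNormalCDF 0 + ∫ t in (0 : ℝ)..x, gaussianPDFReal 0 1 t := by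
    funext x
    linarith [stdNormalCDF_sub_stdNormalCDF 0 x]
  rw [h]
  exact continuous_const.add ((integrable_gaussianPDFReal 0 1).continuous_primitive 0)

lemma stdNormalCDF_stdNormalQuantile {p : ℝ} (hp : p ∈ Ioo 0 1) :
    stdNormalCDF (stdNormalQuantile p) = p := by
  refine Function.invFun_eq (mem_range_of_exists_le_of_exists_ge continuous_stdNormalCDF ?_ ?_)
  · rw [stdNormalCDF_eq_cdf]
    exact ((tendsto_cdf_atBot _).eventually (eventually_le_nhds hp.1)).exists
  · rw [stdNormalCDF_eq_cdf]
    exact ((tendsto_cdf_atTop _).eventually (eventually_ge_nhds hp.2)).exists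

lemma le_stdNormalQuantile_iff {p x : ℝ} (hp : p ∈ Ioo 0 1) :
    x ≤ stdNormalQuantile p ↔ stdNormalCDF x ≤ p := by
  rw [← strictMono_stdNormalCDF.le_iff_le, stdNormalCDF_stdNormalQuantile hp]

lemma stdNormalQuantile_le_iff {p x : ℝ} (hp : p ∈ Ioo 0 1) :
    stdNormalQuantile p ≤ x ↔ p ≤ stdNormalCDF x := by
  rw [← strictMono_stdNormalCDF.le_iff_le, stdNormalCDF_stdNormalQuantile hp]

lemma stdNormalQuantile_pos {p : ℝ} (hp : p ∈ Ioo (1 / 2) 1) : 0 < stdNormalQuantile p := by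
  have hp' : p ∈ Ioo 0 1 := ⟨by linarith [hp.1], hp.2⟩
  rw [← not_le, stdNormalQuantile_le_iff hp', stdNormalCDF_zero, not_le]
  exact hp.1

lemma log_one_sub_div_self_pos {α : ℝ} (h0 : 0 < α) (h : α < 1 / 2) : 0 < log ((1 - α) / α) :=
  log_pos ((one_lt_div h0).2 (by linarith))

lemma antitoneOn_one_sub_two_mul_mul_log :
    AntitoneOn (fun α : ℝ => (1 - 2 * α) * log ((1 - α) / α)) (Ioc 0 (1 / 2)) := by
  rintro x ⟨hx0, -⟩ y ⟨hy0, hy⟩ hxy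
  have hlog : log ((1 - y) / y) ≤ log ((1 - x) / x) := by
    refine log_le_log (div_pos (by linarith) hy0) ?_
    rw [div_le_div_iff₀ hy0 hx0]
    nlinarith
  exact mul_le_mul (by linarith) hlog (log_nonneg ((one_le_div hy0).2 (by linarith)))
    (by linarith)

lemma adaptiveGainRatio_le {lo hi a α : ℝ} (hlo : 0 < lo) (hα : α ∈ Icc lo hi)
    (hhi : hi < 1 / 2) (ha : 0 < a) (hΦ : stdNormalCDF a ≤ 1 - hi) :
    adaptiveGainRatio α ≤ (1 - 2 * lo) * log ((1 - lo) / lo) / (2 * a ^ 2) := by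
  obtain ⟨hloα, hαhi⟩ := hα
  have hp : 1 - α ∈ Ioo 0 1 := ⟨by linarith, by linarith⟩
  have haq : a ≤ stdNormalQuantile (1 - α) := (le_stdNormalQuantile_iff hp).2 (by linarith)
  refine div_le_div₀ ?_ (antitoneOn_one_sub_two_mul_mul_log ⟨hlo, by linarith⟩
    ⟨hlo.trans_le hloα, by linarith⟩ hloα) (by positivity) (by gcongr)
  exact mul_nonneg (by linarith) (log_one_sub_div_self_pos hlo (by linarith)).le

lemma le_adaptiveGainRatio {lo hi b α : ℝ} (hlo : 0 < lo) (hα : α ∈ Icc lo hi)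
    (hhi : hi < 1 / 2) (hΦ : 1 - lo ≤ stdNormalCDF b) :
    (1 - 2 * hi) * log ((1 - hi) / hi) / (2 * b ^ 2) ≤ adaptiveGainRatio α := by
  obtain ⟨hloα, hαhi⟩ := hα
  have hp : 1 - α ∈ Ioo (1 / 2) 1 := ⟨by linarith, by linarith⟩
  have hq := stdNormalQuantile_pos hp
  have hqb : stdNormalQuantile (1 - α) ≤ b :=
    (stdNormalQuantile_le_iff ⟨by linarith, hp.2⟩).2 (by linarith)
  refine div_le_div₀ ?_ (antitoneOn_one_sub_two_mul_mul_log ⟨hlo.trans_le hloα, by linarith⟩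
    ⟨hlo.trans_le (hloα.trans hαhi), hhi.le⟩ hαhi) (by positivity) (by gcongr)
  exact mul_nonneg (by linarith) (log_one_sub_div_self_pos (hlo.trans_le hloα) (by linarith)).le

lemma abs_exp_sub_quadratic_le {x : ℝ} (hx : |x| ≤ 1) :
    |exp x - (1 + x + x ^ 2 / 2)| ≤ 2 / 9 * |x| ^ 3 := by
  have h := Real.exp_bound hx (n := 3) (by norm_num)
  norm_num [Finset.sum_range_succ, Nat.factorial] at h
  linarith

lemma inv_sqrt_two_pi_mem_Ioo : (√(2 * π))⁻¹ ∈ Ioo 0.3989 0.399 := by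
  have hlo : 2.5065 < √(2 * π) := lt_sqrt_of_sq_lt (by nlinarith [pi_gt_d4])
  have hhi : √(2 * π) < 2.5067 := (sqrt_lt' (by norm_num)).2 (by nlinarith [pi_lt_d4])
  constructor
  · rw [lt_inv_comm₀ (by norm_num) (by positivity)]; exact hhi.trans (by norm_num)
  · rw [inv_lt_comm₀ (by positivity) (by norm_num)]; exact lt_trans (by norm_num) hlo

lemma gaussianPDFReal_zero_one_mem_Icc {t : ℝ} (ht : |t| ≤ 1) :
    gaussianPDFReal 0 1 t ∈
      Icc (0.3989 * (1 - t ^ 2 / 2 + t ^ 4 / 8 - t ^ 6 / 36))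
        (0.399 * (1 - t ^ 2 / 2 + t ^ 4 / 8 + t ^ 6 / 36)) := by
  have hu : |-(t ^ 2 / 2)| ≤ 1 := by
    rw [abs_neg, abs_of_nonneg (by positivity)]
    nlinarith [sq_abs t, abs_nonneg t]
  have hexp := abs_le.1 (abs_exp_sub_quadratic_le hu)
  rw [abs_neg, abs_of_nonneg (by positivity)] at hexp
  obtain ⟨hc0, hc1⟩ := inv_sqrt_two_pi_mem_Ioo
  have hpdf : gaussianPDFReal 0 1 t = (√(2 * π))⁻¹ * exp (-(t ^ 2 / 2)) := by
    simp [gaussianPDFReal, neg_div]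
  rw [hpdf]
  constructor
  · calc 0.3989 * (1 - t ^ 2 / 2 + t ^ 4 / 8 - t ^ 6 / 36)
        ≤ 0.3989 * exp (-(t ^ 2 / 2)) := by gcongr; nlinarith
      _ ≤ _ := by gcongr
  · calc (√(2 * π))⁻¹ * exp (-(t ^ 2 / 2)) ≤ 0.399 * exp (-(t ^ 2 / 2)) := by gcongr
      _ ≤ _ := by gcongr; nlinarith

lemma hasDerivAt_septic (c t : ℝ) :
    HasDerivAt (fun t : ℝ => t - t ^ 3 / 6 + t ^ 5 / 40 + c * t ^ 7)
      (1 - t ^ 2 / 2 + t ^ 4 / 8 + 7 * c * t ^ 6) t := by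
  refine ((((hasDerivAt_id' t).sub ((hasDerivAt_pow 3 t).div_const 6)).add
    ((hasDerivAt_pow 5 t).div_const 40)).add ((hasDerivAt_pow 7 t).const_mul c)).congr_deriv ?_
  norm_num
  ring

lemma stdNormalCDF_le {x : ℝ} (hx0 : 0 ≤ x) (hx1 : x ≤ 1) :
    stdNormalCDF x ≤ 1 / 2 + 0.399 * (x - x ^ 3 / 6 + x ^ 5 / 40 + x ^ 7 / 252) := by
  have h := intervalIntegral.integral_le_sub_of_hasDeriv_right_of_le hx0
    (g := fun t => 0.399 * (t - t ^ 3 / 6 + t ^ 5 / 40 + 1 / 252 * t ^ 7))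
    (by fun_prop) (fun t _ => ((hasDerivAt_septic _ t).const_mul _).hasDerivWithinAt)
    (integrable_gaussianPDFReal 0 1).integrableOn fun t ht =>
      (gaussianPDFReal_zero_one_mem_Icc (t := t)
        (abs_le.2 ⟨by linarith [ht.1], by linarith [ht.2]⟩)).2.trans_eq (by ring)
  rw [← stdNormalCDF_sub_stdNormalCDF, stdNormalCDF_zero] at h
  linarith

lemma le_stdNormalCDF {x : ℝ} (hx0 : 0 ≤ x) (hx1 : x ≤ 1) :
    1 / 2 + 0.3989 * (x - x ^ 3 / 6 + x ^ 5 / 40 - x ^ 7 / 252) ≤ stdNormalCDF x := by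
  have h := intervalIntegral.sub_le_integral_of_hasDeriv_right_of_le hx0
    (g := fun t => 0.3989 * (t - t ^ 3 / 6 + t ^ 5 / 40 + -1 / 252 * t ^ 7))
    (by fun_prop) (fun t _ => ((hasDerivAt_septic _ t).const_mul _).hasDerivWithinAt)
    (integrable_gaussianPDFReal 0 1).integrableOn fun t ht =>
      (gaussianPDFReal_zero_one_mem_Icc (t := t)
        (abs_le.2 ⟨by linarith [ht.1], by linarith [ht.2]⟩)).1.trans_eq' (by ring)
  rw [← stdNormalCDF_sub_stdNormalCDF, stdNormalCDF_zero] at h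
  linarith

lemma mul_le_exp_of_one_le {x : ℝ} (hx : 1 ≤ x) :
    2.7182818283 * (x + (x - 1) ^ 2 / 2) ≤ exp x := by
  have h := quadratic_le_exp_of_nonneg (sub_nonneg.2 hx)
  calc 2.7182818283 * (x + (x - 1) ^ 2 / 2) ≤ exp 1 * exp (x - 1) :=
        mul_le_mul exp_one_gt_d9.le (by linarith) (by positivity) (exp_pos 1).le
    _ = exp x := by rw [← exp_add, add_sub_cancel]

lemma exp_le_mul_of_mem_Icc {x : ℝ} (hx : x ∈ Icc 1 2) :
    exp x ≤ 2.7182818286 * (x + (x - 1) ^ 2 / 2 + 2 / 9 * (x - 1) ^ 3) := by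
  have hx1 : |x - 1| ≤ 1 := abs_le.2 ⟨by linarith [hx.1], by linarith [hx.2]⟩
  have h := (abs_le.1 (abs_exp_sub_quadratic_le hx1)).2
  rw [abs_of_nonneg (sub_nonneg.2 hx.1)] at h
  calc exp x = exp 1 * exp (x - 1) := by rw [← exp_add, add_sub_cancel]
    _ ≤ 2.7182818286 * (x + (x - 1) ^ 2 / 2 + 2 / 9 * (x - 1) ^ 3) :=
        mul_le_mul exp_one_lt_d9.le (by linarith) (exp_pos _).le (by norm_num)

lemma adaptiveGainRatio_mem_Icc {lo hi a b L U α : ℝ} (hlo : 0 < lo) (hα : α ∈ Icc lo hi)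
    (hhi : hi < 1 / 2) (ha : 0 < a) (hΦa : stdNormalCDF a ≤ 1 - hi)
    (hΦb : 1 - lo ≤ stdNormalCDF b) (hL : exp L ≤ (1 - hi) / hi) (hU : (1 - lo) / lo ≤ exp U) :
    adaptiveGainRatio α ∈ Icc ((1 - 2 * hi) * L / (2 * b ^ 2)) ((1 - 2 * lo) * U / (2 * a ^ 2)) := by
  have hlohi : lo ≤ hi := hα.1.trans hα.2
  constructor
  · refine le_trans ?_ (le_adaptiveGainRatio hlo hα hhi hΦb)
    gcongr
    · linarith
    · exact (le_log_iff_exp_le (div_pos (by linarith) (by linarith))).2 hL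
  · refine (adaptiveGainRatio_le hlo hα hhi ha hΦa).trans ?_
    gcongr
    · linarith
    · exact (log_le_iff_le_exp (div_pos (by linarith) hlo)).2 hU

lemma adaptiveGainRatio_mem_Ioo_of_mem_Icc {α : ℝ} (hα : α ∈ Icc 0.234 0.236) :
    adaptiveGainRatio α ∈ Ioo 0.59 0.61 := by
  rcases le_total α 0.235 with h | h
  · refine Icc_subset_Ioo ?_ ?_ (adaptiveGainRatio_mem_Icc (lo := 0.234) (hi := 0.235)
      (a := 0.721) (b := 0.727) (L := 1.178) (U := 1.19) (by norm_num) ⟨hα.1, h⟩ (by norm_num)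
      (by norm_num) ((stdNormalCDF_le (by norm_num) (by norm_num)).trans (by norm_num))
      ((le_stdNormalCDF (by norm_num) (by norm_num)).trans' (by norm_num))
      ((exp_le_mul_of_mem_Icc (by norm_num)).trans (by norm_num))
      ((mul_le_exp_of_one_le (by norm_num)).trans' (by norm_num))) <;> norm_num
  · refine Icc_subset_Ioo ?_ ?_ (adaptiveGainRatio_mem_Icc (lo := 0.235) (hi := 0.236)
      (a := 0.718) (b := 0.724) (L := 1.173) (U := 1.185) (by norm_num) ⟨h, hα.2⟩ (by norm_num)
      (by norm_num) ((stdNormalCDF_le (by norm_num) (by norm_num)).trans (by norm_num))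
      ((le_stdNormalCDF (by norm_num) (by norm_num)).trans' (by norm_num))
      ((exp_le_mul_of_mem_Icc (by norm_num)).trans (by norm_num))
      ((mul_le_exp_of_one_le (by norm_num)).trans' (by norm_num))) <;> norm_num

lemma adaptiveGainRatio_pos {α : ℝ} (h0 : 0 < α) (h : α < 1 / 2) : 0 < adaptiveGainRatio α := by
  have hq := stdNormalQuantile_pos (p := 1 - α) ⟨by linarith, by linarith⟩
  exact div_pos (mul_pos (by linarith) (log_one_sub_div_self_pos h0 h)) (by positivity)

/-- for `α ∈ (0, 1/2)` the ratio
`((1-2α) ln((1-α)/α)) / (2 (Φ⁻¹(1-α))²)` is well defined (nonvanishing denominator) and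
strictly positive; for `α` near `0.235` (the minimax fixed point) the ratio is
approximately `0.6`. -/
theorem adaptive_gain_ratio_pos_and_approx :
    (∀ α ∈ Ioo (0 : ℝ) (1 / 2),
      stdNormalQuantile (1 - α) ≠ 0 ∧ 0 < adaptiveGainRatio α) ∧
    (∀ α ∈ Ioo (0 : ℝ) (1 / 2),
      |α - 0.235| < 0.001 → |adaptiveGainRatio α - 0.6| < 0.01) := by
  refine ⟨fun α ⟨h0, h⟩ => ⟨(stdNormalQuantile_pos ⟨by linarith, by linarith⟩).ne',
    adaptiveGainRatio_pos h0 h⟩, ?_⟩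
  rintro α - hα
  rw [abs_sub_lt_iff] at hα ⊢
  have h := adaptiveGainRatio_mem_Ioo_of_mem_Icc (α := α) ⟨by linarith, by linarith⟩
  constructor <;> linarith [h.1, h.2]
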